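/- On the polynomial algebra ℂ[x¹,…,xⁿ,ξ₁,…,ξₙ] (n ≥ 1), the operators R, E, T, G, D, L span a Lie subalgebra of the endomorphism algebra (under the commutator bracket) isomorphic to sl(2,ℝ) ⋉ h₁, where {R, E, T} spans a copy of sl(2,ℝ) and {G, D, L} spans a Heisenberg Lie algebra h₁; explicitly, the following bracket relations hold: [E,R] = 2R, [E,T] = −2T, [T,R] = 4E, [D,G] = L, [G,L] = 0, [D,L] = 0, [E,G] = G, [E,D] = −D, [E,L] = 0, [R,G] = 0, [R,D] = −2G, [R,L] = 0, [T,G] = 2D, [T,D] = 0, [T,L] = 0. -/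

import Mathlib

open scoped BigOperators

noncomputable section
open MvPolynomial

/-- The polynomial algebra `ℂ[x¹,…,xⁿ,ξ₁,…,ξₙ]`: `Sum.inl i ↦ x^i`, `Sum.inr i ↦ ξ_i`. -/
abbrev PolyAlg (n : ℕ) := MvPolynomial (Fin n ⊕ Fin n) ℂ

/-- The variable `x^i`. -/
def xv {n : ℕ} (i : Fin n) : PolyAlg n := X (Sum.inl i)

/-- The variable `ξ_i`. -/
def xiv {n : ℕ} (i : Fin n) : PolyAlg n := X (Sum.inr i)

/-- The operator `∂/∂x^i`. -/
def pdx {n : ℕ} (i : Fin n) : Module.End ℂ (PolyAlg n) :=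
  (pderiv (Sum.inl i)).toLinearMap

/-- The operator `∂/∂ξ_i`. -/
def pdxi {n : ℕ} (i : Fin n) : Module.End ℂ (PolyAlg n) :=
  (pderiv (Sum.inr i)).toLinearMap

/-- Multiplication by a polynomial, as an operator. -/
def mulOp {n : ℕ} (q : PolyAlg n) : Module.End ℂ (PolyAlg n) := LinearMap.mulLeft ℂ q

/-- Entries of the flat metric `g = diag(1,…,1,−1,…,−1)` of signature `(p, n−p)`. -/
def gmet (p : ℕ) {n : ℕ} (i j : Fin n) : ℂ :=
  if i = j then (if (i : ℕ) < p then 1 else -1) else 0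

/-- `R` = multiplication by `g^{ij} ξ_i ξ_j`. -/
def opR (p : ℕ) {n : ℕ} : Module.End ℂ (PolyAlg n) :=
  mulOp (∑ i, ∑ j, C (gmet p i j) * xiv i * xiv j)

/-- `E = ξ_i ∂/∂ξ_i + n/2`. -/
def opE {n : ℕ} : Module.End ℂ (PolyAlg n) :=
  (∑ i, mulOp (xiv i) * pdxi i) + ((n : ℂ) / 2) • 1

/-- `T = g^{ij} (∂/∂ξ_i)(∂/∂ξ_j)`. -/
def opT (p : ℕ) {n : ℕ} : Module.End ℂ (PolyAlg n) :=
  ∑ i, ∑ j, gmet p i j • (pdxi i * pdxi j)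

/-- `G = g^{ij} ξ_i ∂/∂x^j`. -/
def opG (p : ℕ) {n : ℕ} : Module.End ℂ (PolyAlg n) :=
  ∑ i, ∑ j, gmet p i j • (mulOp (xiv i) * pdx j)

/-- `D = (∂/∂ξ_i)(∂/∂x^i)`. -/
def opD {n : ℕ} : Module.End ℂ (PolyAlg n) := ∑ i, pdxi i * pdx i

/-- `L = g^{ij} (∂/∂x^i)(∂/∂x^j)`. -/
def opL (p : ℕ) {n : ℕ} : Module.End ℂ (PolyAlg n) :=
  ∑ i, ∑ j, gmet p i j • (pdx i * pdx j)

-- derivative commutation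
lemma pdX' {n : ℕ} (u v : Fin n ⊕ Fin n) :
    (pderiv u) (X v : PolyAlg n) = if v = u then 1 else 0 := by
  by_cases h : v = u <;> simp [h]

set_option maxHeartbeats 800000 in
lemma pd_comm {n : ℕ} (a b : Fin n ⊕ Fin n) (f : PolyAlg n) :
    pderiv a (pderiv b f) = pderiv b (pderiv a f) := by
  induction f using MvPolynomial.induction_on with
  | C c => simp
  | add f g hf hg => simp [hf, hg]
  | mul_X f j hf =>
    simp only [pderiv_mul, map_add, pdX', hf]
    by_cases hb : j = b <;> by_cases ha : j = a <;>
      simp [hb, ha, apply_ite (pderiv a), apply_ite (pderiv b), pderiv_one] <;> ring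

lemma lie_pd_mulOp {n : ℕ} (a : Fin n ⊕ Fin n) (j : Fin n) :
    ⁅((pderiv a).toLinearMap : Module.End ℂ (PolyAlg n)), mulOp (xiv j)⁆
      = if a = Sum.inr j then 1 else 0 := by
  ext f
  by_cases h : a = Sum.inr j <;>
    simp [Ring.lie_def, mulOp, Module.End.mul_apply, pderiv_mul, xiv, h]

lemma lie_pdxi_mulOp {n : ℕ} (i j : Fin n) :
    ⁅(pdxi i : Module.End ℂ (PolyAlg n)), mulOp (xiv j)⁆ = if i = j then 1 else 0 := by
  rw [pdxi, lie_pd_mulOp]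
  simp [Sum.inr.injEq]

lemma lie_pdx_mulOp {n : ℕ} (i j : Fin n) :
    ⁅(pdx i : Module.End ℂ (PolyAlg n)), mulOp (xiv j)⁆ = 0 := by
  rw [pdx, lie_pd_mulOp]; simp

lemma commute_pd {n : ℕ} (a b : Fin n ⊕ Fin n) :
    Commute ((pderiv a).toLinearMap : Module.End ℂ (PolyAlg n)) (pderiv b).toLinearMap := by
  have : ((pderiv a).toLinearMap : Module.End ℂ (PolyAlg n)) * (pderiv b).toLinearMap
      = (pderiv b).toLinearMap * (pderiv a).toLinearMap := by
    apply LinearMap.ext; intro f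
    simpa [Module.End.mul_apply] using pd_comm a b f
  exact this

lemma commute_mulOp {n : ℕ} (q r : PolyAlg n) : Commute (mulOp q) (mulOp r) := by
  have : (mulOp q : Module.End ℂ (PolyAlg n)) * mulOp r = mulOp r * mulOp q := by
    apply LinearMap.ext; intro f
    simp [mulOp, Module.End.mul_apply, mul_left_comm]
  exact this

-- bracket/commute conversions
lemma lie_eq_zero_of_commute {A : Type*} [Ring A] {a b : A} (h : Commute a b) :
    ⁅a, b⁆ = 0 := by rw [Ring.lie_def, sub_eq_zero]; exact h.eq

lemma commute_of_lie_eq_zero {A : Type*} [Ring A] {a b : A} (h : ⁅a, b⁆ = 0) :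
    Commute a b := by
  rw [Ring.lie_def, sub_eq_zero] at h; exact h

-- Leibniz rules for the ring commutator
lemma lie_mul_right {A : Type*} [Ring A] (a b c : A) :
    ⁅a, b * c⁆ = ⁅a, b⁆ * c + b * ⁅a, c⁆ := by
  simp only [Ring.lie_def]; noncomm_ring

lemma mul_lie_left {A : Type*} [Ring A] (a b c : A) :
    ⁅a * b, c⁆ = a * ⁅b, c⁆ + ⁅a, c⁆ * b := by
  simp only [Ring.lie_def]; noncomm_ring

section diag
variable {A : Type*} [Ring A] {X P Q : A}

lemma rlie_skew (x y : A) : -⁅y, x⁆ = ⁅x, y⁆ := by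
  simp only [Ring.lie_def]; noncomm_ring

lemma rlie_self (x : A) : ⁅x, x⁆ = 0 := by
  simp only [Ring.lie_def, sub_self]

lemma dER (hPX : ⁅P, X⁆ = 1) : ⁅X * P, X * X⁆ = X * X + X * X := by
  have hXP : ⁅X, P⁆ = -1 := by rw [← rlie_skew, hPX]
  simp only [lie_mul_right, mul_lie_left, hPX, hXP, rlie_self]
  noncomm_ring

lemma dET (hPX : ⁅P, X⁆ = 1) : ⁅X * P, P * P⁆ = -(P * P + P * P) := by
  have hXP : ⁅X, P⁆ = -1 := by rw [← rlie_skew, hPX]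
  simp only [lie_mul_right, mul_lie_left, hPX, hXP, rlie_self]
  noncomm_ring

lemma dTR (hPX : ⁅P, X⁆ = 1) :
    ⁅P * P, X * X⁆ = (X * P + X * P + X * P + X * P) + (1 + 1) := by
  have hPX' : P * X = X * P + 1 := by
    rw [Ring.lie_def] at hPX; exact sub_eq_iff_eq_add'.mp hPX
  simp only [lie_mul_right, mul_lie_left, hPX, rlie_self, one_mul, mul_one, zero_mul,
    mul_zero, add_zero, zero_add, mul_add, add_mul]
  rw [hPX']
  abel

lemma dDG (hPX : ⁅P, X⁆ = 1) (hQX : ⁅Q, X⁆ = 0) (hQP : ⁅Q, P⁆ = 0) :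
    ⁅P * Q, X * Q⁆ = Q * Q := by
  have hPQ : ⁅P, Q⁆ = 0 := by rw [← rlie_skew, hQP, neg_zero]
  simp only [lie_mul_right, mul_lie_left, hPX, hQX, hQP, hPQ, rlie_self]
  noncomm_ring

lemma dGL (hQX : ⁅Q, X⁆ = 0) : ⁅X * Q, Q * Q⁆ = 0 := by
  have hXQ : ⁅X, Q⁆ = 0 := by rw [← rlie_skew, hQX, neg_zero]
  simp only [lie_mul_right, mul_lie_left, hXQ, rlie_self]
  noncomm_ring

lemma dDL (hQP : ⁅Q, P⁆ = 0) : ⁅P * Q, Q * Q⁆ = 0 := by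
  have hPQ : ⁅P, Q⁆ = 0 := by rw [← rlie_skew, hQP, neg_zero]
  simp only [lie_mul_right, mul_lie_left, hPQ, rlie_self]
  noncomm_ring

lemma dEG (hPX : ⁅P, X⁆ = 1) (hQX : ⁅Q, X⁆ = 0) (hQP : ⁅Q, P⁆ = 0) :
    ⁅X * P, X * Q⁆ = X * Q := by
  have hPQ : ⁅P, Q⁆ = 0 := by rw [← rlie_skew, hQP, neg_zero]
  have hXQ : ⁅X, Q⁆ = 0 := by rw [← rlie_skew, hQX, neg_zero]
  have h1 : ⁅P, X * Q⁆ = Q := by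
    rw [lie_mul_right, hPX, hPQ]; simp
  have h2 : ⁅X, X * Q⁆ = 0 := by
    rw [lie_mul_right, rlie_self, hXQ]; simp
  rw [mul_lie_left, h1, h2]; simp

lemma dED (hPX : ⁅P, X⁆ = 1) (hQX : ⁅Q, X⁆ = 0) (hQP : ⁅Q, P⁆ = 0) :
    ⁅X * P, P * Q⁆ = -(P * Q) := by
  have hXP : ⁅X, P⁆ = -1 := by rw [← rlie_skew, hPX]
  have hXQ : ⁅X, Q⁆ = 0 := by rw [← rlie_skew, hQX, neg_zero]
  have hPQ : ⁅P, Q⁆ = 0 := by rw [← rlie_skew, hQP, neg_zero]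
  have hQP' : Q * P = P * Q := by
    rw [Ring.lie_def, sub_eq_zero] at hQP; exact hQP
  have h1 : ⁅X, P * Q⁆ = -Q := by
    rw [lie_mul_right, hXP, hXQ]; simp
  have h2 : ⁅P, P * Q⁆ = 0 := by
    rw [lie_mul_right, rlie_self, hPQ]; simp
  rw [mul_lie_left, h1, h2]
  simp [neg_mul, hQP']

lemma dEL (hQX : ⁅Q, X⁆ = 0) (hQP : ⁅Q, P⁆ = 0) : ⁅X * P, Q * Q⁆ = 0 := by
  have hXQ : ⁅X, Q⁆ = 0 := by rw [← rlie_skew, hQX, neg_zero]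
  have hPQ : ⁅P, Q⁆ = 0 := by rw [← rlie_skew, hQP, neg_zero]
  simp only [lie_mul_right, mul_lie_left, hXQ, hPQ, rlie_self]
  noncomm_ring

lemma dRG (hQX : ⁅Q, X⁆ = 0) : ⁅X * X, X * Q⁆ = 0 := by
  have hXQ : ⁅X, Q⁆ = 0 := by rw [← rlie_skew, hQX, neg_zero]
  simp only [lie_mul_right, mul_lie_left, hXQ, rlie_self]
  noncomm_ring

lemma dRD (hPX : ⁅P, X⁆ = 1) (hQX : ⁅Q, X⁆ = 0) :
    ⁅X * X, P * Q⁆ = -(X * Q + X * Q) := by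
  have hXP : ⁅X, P⁆ = -1 := by rw [← rlie_skew, hPX]
  have hXQ : ⁅X, Q⁆ = 0 := by rw [← rlie_skew, hQX, neg_zero]
  have hQX' : Q * X = X * Q := by
    rw [Ring.lie_def, sub_eq_zero] at hQX; exact hQX
  have h1 : ⁅X, P * Q⁆ = -Q := by
    rw [lie_mul_right, hXP, hXQ]; simp
  rw [mul_lie_left, h1]
  rw [mul_neg, neg_mul, hQX']
  abel

lemma dRL (hQX : ⁅Q, X⁆ = 0) : ⁅X * X, Q * Q⁆ = 0 := by
  have hXQ : ⁅X, Q⁆ = 0 := by rw [← rlie_skew, hQX, neg_zero]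
  simp only [lie_mul_right, mul_lie_left, hXQ, rlie_self]
  noncomm_ring

lemma dTG (hPX : ⁅P, X⁆ = 1) (hQP : ⁅Q, P⁆ = 0) :
    ⁅P * P, X * Q⁆ = P * Q + P * Q := by
  have hPQ : ⁅P, Q⁆ = 0 := by rw [← rlie_skew, hQP, neg_zero]
  have hQP' : Q * P = P * Q := by
    rw [Ring.lie_def, sub_eq_zero] at hQP; exact hQP
  have h1 : ⁅P, X * Q⁆ = Q := by
    rw [lie_mul_right, hPX, hPQ]; simp
  rw [mul_lie_left, h1, hQP']

lemma dTD (hQP : ⁅Q, P⁆ = 0) : ⁅P * P, P * Q⁆ = 0 := by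
  have hPQ : ⁅P, Q⁆ = 0 := by rw [← rlie_skew, hQP, neg_zero]
  simp only [lie_mul_right, mul_lie_left, hPQ, rlie_self]
  noncomm_ring

lemma dTL (hQP : ⁅Q, P⁆ = 0) : ⁅P * P, Q * Q⁆ = 0 := by
  have hPQ : ⁅P, Q⁆ = 0 := by rw [← rlie_skew, hQP, neg_zero]
  simp only [lie_mul_right, mul_lie_left, hPQ, rlie_self]
  noncomm_ring

end diag

/-- `ε_i = ±1`, the diagonal entries of the metric. -/
def eps (p : ℕ) {n : ℕ} (i : Fin n) : ℂ := if (i : ℕ) < p then 1 else -1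

lemma eps_mul_self (p : ℕ) {n : ℕ} (i : Fin n) : eps p i * eps p i = 1 := by
  unfold eps; split <;> norm_num

lemma gmet_eq (p : ℕ) {n : ℕ} (i j : Fin n) :
    gmet p i j = if i = j then eps p i else 0 := rfl

lemma sum_gmet (p : ℕ) {n : ℕ} (F : Fin n → Fin n → Module.End ℂ (PolyAlg n)) :
    (∑ i, ∑ j, gmet p i j • F i j) = ∑ i, eps p i • F i i := by
  refine Finset.sum_congr rfl fun i _ => ?_
  rw [Finset.sum_eq_single i]
  · rw [gmet_eq]; simp
  · intro j _ hj
    rw [gmet_eq, if_neg (fun h : i = j => hj h.symm), zero_smul]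
  · simp

lemma mulOp_sum {n : ℕ} {ι : Type*} (s : Finset ι) (f : ι → PolyAlg n) :
    mulOp (∑ i ∈ s, f i) = ∑ i ∈ s, mulOp (f i) := by
  apply LinearMap.ext; intro r
  simp [mulOp, LinearMap.sum_apply, Finset.sum_mul]

lemma mulOp_smul {n : ℕ} (c : ℂ) (q : PolyAlg n) : mulOp (c • q) = c • mulOp q := by
  apply LinearMap.ext; intro r
  simp [mulOp, smul_mul_assoc]

lemma mulOp_mul {n : ℕ} (a b : PolyAlg n) : mulOp (a * b) = mulOp a * mulOp b :=
  LinearMap.mulLeft_mul (R := ℂ) (a := a) (b := b)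

lemma opR_eq (p n : ℕ) :
    (opR p : Module.End ℂ (PolyAlg n)) = ∑ i, eps p i • (mulOp (xiv i) * mulOp (xiv i)) := by
  rw [opR, mulOp_sum]
  rw [show (∑ i : Fin n, mulOp (∑ j, C (gmet p i j) * xiv i * xiv j))
      = ∑ i : Fin n, ∑ j, gmet p i j • (mulOp (xiv i) * mulOp (xiv j)) from
    Finset.sum_congr rfl fun i _ => by
      rw [mulOp_sum]
      refine Finset.sum_congr rfl fun j _ => ?_
      rw [mul_assoc, ← smul_eq_C_mul, mulOp_smul, mulOp_mul]]
  exact sum_gmet p _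

lemma opT_eq (p n : ℕ) :
    (opT p : Module.End ℂ (PolyAlg n)) = ∑ i, eps p i • (pdxi i * pdxi i) := sum_gmet p _

lemma opG_eq (p n : ℕ) :
    (opG p : Module.End ℂ (PolyAlg n)) = ∑ i, eps p i • (mulOp (xiv i) * pdx i) := sum_gmet p _

lemma opL_eq (p n : ℕ) :
    (opL p : Module.End ℂ (PolyAlg n)) = ∑ i, eps p i • (pdx i * pdx i) := sum_gmet p _

lemma lie_sum_diag {n : ℕ} (a b : Fin n → Module.End ℂ (PolyAlg n))
    (h : ∀ i j, i ≠ j → Commute (a i) (b j)) :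
    ⁅∑ i, a i, ∑ j, b j⁆ = ∑ i, ⁅a i, b i⁆ := by
  rw [Ring.lie_def]
  have h1 : (∑ i, a i) * (∑ j, b j) = ∑ i, ∑ j, a i * b j := by rw [Finset.sum_mul_sum]
  have h2 : (∑ j, b j) * (∑ i, a i) = ∑ i, ∑ j, b j * a i := by
    rw [Finset.sum_mul_sum]; exact Finset.sum_comm
  rw [h1, h2, ← Finset.sum_sub_distrib]
  refine Finset.sum_congr rfl fun i _ => ?_
  rw [← Finset.sum_sub_distrib, Finset.sum_eq_single i]
  · rw [Ring.lie_def]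
  · intro j _ hj
    exact sub_eq_zero.mpr (h i j (Ne.symm hj)).eq
  · simp

section atoms
variable {n : ℕ}

lemma hPXa (i : Fin n) : ⁅(pdxi i : Module.End ℂ (PolyAlg n)), mulOp (xiv i)⁆ = 1 := by
  rw [lie_pdxi_mulOp]; simp

lemma hQXa (i : Fin n) : ⁅(pdx i : Module.End ℂ (PolyAlg n)), mulOp (xiv i)⁆ = 0 :=
  lie_pdx_mulOp i i

lemma hQPa (i : Fin n) : ⁅(pdx i : Module.End ℂ (PolyAlg n)), pdxi i⁆ = 0 :=
  lie_eq_zero_of_commute (commute_pd _ _)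

lemma cXX (i j : Fin n) : Commute (mulOp (xiv i) : Module.End ℂ (PolyAlg n)) (mulOp (xiv j)) :=
  commute_mulOp _ _
lemma cPP (i j : Fin n) : Commute (pdxi i : Module.End ℂ (PolyAlg n)) (pdxi j) :=
  commute_pd _ _
lemma cQQ (i j : Fin n) : Commute (pdx i : Module.End ℂ (PolyAlg n)) (pdx j) :=
  commute_pd _ _
lemma cPQ (i j : Fin n) : Commute (pdxi i : Module.End ℂ (PolyAlg n)) (pdx j) :=
  commute_pd _ _
lemma cQP (i j : Fin n) : Commute (pdx i : Module.End ℂ (PolyAlg n)) (pdxi j) :=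
  commute_pd _ _
lemma cQX (i j : Fin n) : Commute (pdx i : Module.End ℂ (PolyAlg n)) (mulOp (xiv j)) :=
  commute_of_lie_eq_zero (lie_pdx_mulOp i j)
lemma cXQ (i j : Fin n) : Commute (mulOp (xiv i) : Module.End ℂ (PolyAlg n)) (pdx j) :=
  (cQX j i).symm
lemma cPX {i j : Fin n} (hij : i ≠ j) :
    Commute (pdxi i : Module.End ℂ (PolyAlg n)) (mulOp (xiv j)) :=
  commute_of_lie_eq_zero (by rw [lie_pdxi_mulOp, if_neg hij])
lemma cXP {i j : Fin n} (hij : i ≠ j) :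
    Commute (mulOp (xiv i) : Module.End ℂ (PolyAlg n)) (pdxi j) :=
  (cPX hij.symm).symm

lemma commute_prod {a1 a2 b1 b2 : Module.End ℂ (PolyAlg n)} (h11 : Commute a1 b1)
    (h12 : Commute a1 b2) (h21 : Commute a2 b1) (h22 : Commute a2 b2) :
    Commute (a1 * a2) (b1 * b2) :=
  (h11.mul_right h12).mul_left (h21.mul_right h22)

lemma lie_one_smul (c : ℂ) (y : Module.End ℂ (PolyAlg n)) : ⁅c • (1 : Module.End ℂ (PolyAlg n)), y⁆ = 0 := by
  simp [Ring.lie_def, mul_smul_comm, smul_mul_assoc]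

lemma radd_lie (x y z : Module.End ℂ (PolyAlg n)) : ⁅x + y, z⁆ = ⁅x, z⁆ + ⁅y, z⁆ := by
  simp only [Ring.lie_def]; noncomm_ring

lemma lie_opE_eq (y : Module.End ℂ (PolyAlg n)) :
    ⁅(opE : Module.End ℂ (PolyAlg n)), y⁆ = ⁅∑ i : Fin n, mulOp (xiv i) * pdxi i, y⁆ := by
  rw [opE, radd_lie, lie_one_smul, add_zero]

end atoms

section rels
variable {n : ℕ}

lemma lie_smul' (c : ℂ) (x y : Module.End ℂ (PolyAlg n)) : ⁅x, c • y⁆ = c • ⁅x, y⁆ := by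
  simp [Ring.lie_def, mul_smul_comm, smul_mul_assoc, smul_sub]

lemma smul_lie' (c : ℂ) (x y : Module.End ℂ (PolyAlg n)) : ⁅c • x, y⁆ = c • ⁅x, y⁆ := by
  simp [Ring.lie_def, mul_smul_comm, smul_mul_assoc, smul_sub]

variable (p : ℕ)

lemma relER : ⁅(opE : Module.End ℂ (PolyAlg n)), (opR p : Module.End ℂ (PolyAlg n))⁆ = 2 • (opR p : Module.End ℂ (PolyAlg n)) := by
  rw [lie_opE_eq, opR_eq]
  rw [lie_sum_diag _ _ (fun i j hij =>
    (commute_prod (cXX i j) (cXX i j) (cPX hij) (cPX hij)).smul_right _)]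
  rw [show (∑ i : Fin n, ⁅mulOp (xiv i) * pdxi i, eps p i • (mulOp (xiv i) * mulOp (xiv i))⁆)
      = ∑ i : Fin n, (eps p i • (mulOp (xiv i) * mulOp (xiv i))
          + eps p i • (mulOp (xiv i) * mulOp (xiv i))) from
    Finset.sum_congr rfl fun i _ => by rw [lie_smul', dER (hPXa i), smul_add]]
  rw [Finset.sum_add_distrib, ← opR_eq, two_smul]

lemma relET : ⁅(opE : Module.End ℂ (PolyAlg n)), (opT p : Module.End ℂ (PolyAlg n))⁆ = -(2 • (opT p : Module.End ℂ (PolyAlg n))) := by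
  rw [lie_opE_eq, opT_eq]
  rw [lie_sum_diag _ _ (fun i j hij =>
    (commute_prod (cXP hij) (cXP hij) (cPP i j) (cPP i j)).smul_right _)]
  rw [show (∑ i : Fin n, ⁅mulOp (xiv i) * pdxi i, eps p i • (pdxi i * pdxi i)⁆)
      = ∑ i : Fin n, -(eps p i • (pdxi i * pdxi i) + eps p i • (pdxi i * pdxi i)) from
    Finset.sum_congr rfl fun i _ => by rw [lie_smul', dET (hPXa i), smul_neg, smul_add]]
  rw [Finset.sum_neg_distrib, Finset.sum_add_distrib, ← opT_eq, two_smul]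

lemma relTR : ⁅(opT p : Module.End ℂ (PolyAlg n)), (opR p : Module.End ℂ (PolyAlg n))⁆ = 4 • (opE : Module.End ℂ (PolyAlg n)) := by
  rw [opT_eq, opR_eq]
  rw [lie_sum_diag _ _ (fun i j hij =>
    ((commute_prod (cPX hij) (cPX hij) (cPX hij) (cPX hij)).smul_right _).smul_left _)]
  rw [show (∑ i : Fin n, ⁅eps p i • (pdxi i * pdxi i), eps p i • (mulOp (xiv i) * mulOp (xiv i))⁆)
      = ∑ i : Fin n, ((mulOp (xiv i) * pdxi i + mulOp (xiv i) * pdxi i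
          + mulOp (xiv i) * pdxi i + mulOp (xiv i) * pdxi i) + (1 + 1)) from
    Finset.sum_congr rfl fun i _ => by
      rw [smul_lie', lie_smul', smul_smul, eps_mul_self, one_smul, dTR (hPXa i)]]
  rw [Finset.sum_add_distrib, Finset.sum_add_distrib, Finset.sum_add_distrib,
    Finset.sum_add_distrib, Finset.sum_const, Finset.card_univ, Fintype.card_fin, opE]
  have hn : n • ((1 : Module.End ℂ (PolyAlg n)) + 1) = (n : ℂ) • 1 + (n : ℂ) • 1 := by
    rw [smul_add, Nat.cast_smul_eq_nsmul]
  rw [hn]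
  module

lemma relDG : ⁅(opD : Module.End ℂ (PolyAlg n)), (opG p : Module.End ℂ (PolyAlg n))⁆ = (opL p : Module.End ℂ (PolyAlg n)) := by
  rw [opD, opG_eq, opL_eq]
  rw [lie_sum_diag _ _ (fun i j hij =>
    (commute_prod (cPX hij) (cPQ i j) (cQX i j) (cQQ i j)).smul_right _)]
  exact Finset.sum_congr rfl fun i _ => by
    rw [lie_smul', dDG (hPXa i) (hQXa i) (hQPa i)]

lemma relGL : ⁅(opG p : Module.End ℂ (PolyAlg n)), (opL p : Module.End ℂ (PolyAlg n))⁆ = 0 := by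
  rw [opG_eq, opL_eq]
  rw [lie_sum_diag _ _ (fun i j hij =>
    ((commute_prod (cXQ i j) (cXQ i j) (cQQ i j) (cQQ i j)).smul_right _).smul_left _)]
  exact Finset.sum_eq_zero fun i _ => by
    rw [smul_lie', lie_smul', dGL (hQXa i), smul_zero, smul_zero]

lemma relDL : ⁅(opD : Module.End ℂ (PolyAlg n)), (opL p : Module.End ℂ (PolyAlg n))⁆ = 0 := by
  rw [opD, opL_eq]
  rw [lie_sum_diag _ _ (fun i j hij =>
    (commute_prod (cPQ i j) (cPQ i j) (cQQ i j) (cQQ i j)).smul_right _)]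
  exact Finset.sum_eq_zero fun i _ => by
    rw [lie_smul', dDL (hQPa i), smul_zero]

lemma relEG : ⁅(opE : Module.End ℂ (PolyAlg n)), (opG p : Module.End ℂ (PolyAlg n))⁆ = (opG p : Module.End ℂ (PolyAlg n)) := by
  rw [lie_opE_eq, opG_eq]
  rw [lie_sum_diag _ _ (fun i j hij =>
    (commute_prod (cXX i j) (cXQ i j) (cPX hij) (cPQ i j)).smul_right _)]
  rw [show (∑ i : Fin n, ⁅mulOp (xiv i) * pdxi i, eps p i • (mulOp (xiv i) * pdx i)⁆)
      = ∑ i : Fin n, eps p i • (mulOp (xiv i) * pdx i) from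
    Finset.sum_congr rfl fun i _ => by
      rw [lie_smul', dEG (hPXa i) (hQXa i) (hQPa i)]]

lemma relED : ⁅(opE : Module.End ℂ (PolyAlg n)), (opD : Module.End ℂ (PolyAlg n))⁆ = -(opD : Module.End ℂ (PolyAlg n)) := by
  rw [lie_opE_eq, opD]
  rw [lie_sum_diag _ _ (fun i j hij =>
    commute_prod (cXP hij) (cXQ i j) (cPP i j) (cPQ i j))]
  rw [show (∑ i : Fin n, ⁅mulOp (xiv i) * pdxi i, pdxi i * pdx i⁆)
      = ∑ i : Fin n, -(pdxi i * pdx i) from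
    Finset.sum_congr rfl fun i _ => dED (hPXa i) (hQXa i) (hQPa i)]
  rw [Finset.sum_neg_distrib]

lemma relEL : ⁅(opE : Module.End ℂ (PolyAlg n)), (opL p : Module.End ℂ (PolyAlg n))⁆ = 0 := by
  rw [lie_opE_eq, opL_eq]
  rw [lie_sum_diag _ _ (fun i j hij =>
    (commute_prod (cXQ i j) (cXQ i j) (cPQ i j) (cPQ i j)).smul_right _)]
  exact Finset.sum_eq_zero fun i _ => by
    rw [lie_smul', dEL (hQXa i) (hQPa i), smul_zero]

lemma relRG : ⁅(opR p : Module.End ℂ (PolyAlg n)), (opG p : Module.End ℂ (PolyAlg n))⁆ = 0 := by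
  rw [opR_eq, opG_eq]
  rw [lie_sum_diag _ _ (fun i j hij =>
    ((commute_prod (cXX i j) (cXQ i j) (cXX i j) (cXQ i j)).smul_right _).smul_left _)]
  exact Finset.sum_eq_zero fun i _ => by
    rw [smul_lie', lie_smul', dRG (hQXa i), smul_zero, smul_zero]

lemma relRD : ⁅(opR p : Module.End ℂ (PolyAlg n)), (opD : Module.End ℂ (PolyAlg n))⁆ = -(2 • (opG p : Module.End ℂ (PolyAlg n))) := by
  rw [opR_eq, opD]
  rw [lie_sum_diag _ _ (fun i j hij =>
    (commute_prod (cXP hij) (cXQ i j) (cXP hij) (cXQ i j)).smul_left _)]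
  rw [show (∑ i : Fin n, ⁅eps p i • (mulOp (xiv i) * mulOp (xiv i)), pdxi i * pdx i⁆)
      = ∑ i : Fin n, -(eps p i • (mulOp (xiv i) * pdx i) + eps p i • (mulOp (xiv i) * pdx i)) from
    Finset.sum_congr rfl fun i _ => by
      rw [smul_lie', dRD (hPXa i) (hQXa i), smul_neg, smul_add]]
  rw [Finset.sum_neg_distrib, Finset.sum_add_distrib, ← opG_eq, two_smul]

lemma relRL : ⁅(opR p : Module.End ℂ (PolyAlg n)), (opL p : Module.End ℂ (PolyAlg n))⁆ = 0 := by
  rw [opR_eq, opL_eq]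
  rw [lie_sum_diag _ _ (fun i j hij =>
    ((commute_prod (cXQ i j) (cXQ i j) (cXQ i j) (cXQ i j)).smul_right _).smul_left _)]
  exact Finset.sum_eq_zero fun i _ => by
    rw [smul_lie', lie_smul', dRL (hQXa i), smul_zero, smul_zero]

lemma relTG : ⁅(opT p : Module.End ℂ (PolyAlg n)), (opG p : Module.End ℂ (PolyAlg n))⁆ = 2 • (opD : Module.End ℂ (PolyAlg n)) := by
  rw [opT_eq, opG_eq]
  rw [lie_sum_diag _ _ (fun i j hij =>
    ((commute_prod (cPX hij) (cPQ i j) (cPX hij) (cPQ i j)).smul_right _).smul_left _)]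
  rw [show (∑ i : Fin n, ⁅eps p i • (pdxi i * pdxi i), eps p i • (mulOp (xiv i) * pdx i)⁆)
      = ∑ i : Fin n, (pdxi i * pdx i + pdxi i * pdx i) from
    Finset.sum_congr rfl fun i _ => by
      rw [smul_lie', lie_smul', smul_smul, eps_mul_self, one_smul, dTG (hPXa i) (hQPa i)]]
  rw [Finset.sum_add_distrib, ← opD, two_smul]

lemma relTD : ⁅(opT p : Module.End ℂ (PolyAlg n)), (opD : Module.End ℂ (PolyAlg n))⁆ = 0 := by
  rw [opT_eq, opD]
  rw [lie_sum_diag _ _ (fun i j hij =>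
    (commute_prod (cPP i j) (cPQ i j) (cPP i j) (cPQ i j)).smul_left _)]
  exact Finset.sum_eq_zero fun i _ => by
    rw [smul_lie', dTD (hQPa i), smul_zero]

lemma relTL : ⁅(opT p : Module.End ℂ (PolyAlg n)), (opL p : Module.End ℂ (PolyAlg n))⁆ = 0 := by
  rw [opT_eq, opL_eq]
  rw [lie_sum_diag _ _ (fun i j hij =>
    ((commute_prod (cPQ i j) (cPQ i j) (cPQ i j) (cPQ i j)).smul_right _).smul_left _)]
  exact Finset.sum_eq_zero fun i _ => by
    rw [smul_lie', lie_smul', dTL (hQPa i), smul_zero, smul_zero]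

end rels

set_option maxHeartbeats 1000000 in
set_option synthInstance.maxHeartbeats 400000 in
/-- the operators `R, E, T, G, D, L` span a Lie subalgebra of
`End(ℂ[x,ξ])` isomorphic to `sl(2,ℝ) ⋉ h₁`, where `{R,E,T}` spans a copy of
`sl(2,ℝ)` and `{G,D,L}` a Heisenberg algebra `h₁`; explicitly, the following
commutator bracket relations hold. -/
theorem bracket_relations_sl2_semidirect_heisenberg
    (p q n : ℕ) (hpq : n = p + q) (hn : 1 ≤ n) :
    ⁅(opE : Module.End ℂ (PolyAlg n)), (opR p : Module.End ℂ (PolyAlg n))⁆ = 2 • (opR p : Module.End ℂ (PolyAlg n)) ∧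
    ⁅(opE : Module.End ℂ (PolyAlg n)), (opT p : Module.End ℂ (PolyAlg n))⁆ = (-(2 • opT p) : Module.End ℂ (PolyAlg n)) ∧
    ⁅(opT p : Module.End ℂ (PolyAlg n)), (opR p : Module.End ℂ (PolyAlg n))⁆ = 4 • (opE : Module.End ℂ (PolyAlg n)) ∧
    ⁅(opD : Module.End ℂ (PolyAlg n)), (opG p : Module.End ℂ (PolyAlg n))⁆ = (opL p : Module.End ℂ (PolyAlg n)) ∧
    ⁅(opG p : Module.End ℂ (PolyAlg n)), (opL p : Module.End ℂ (PolyAlg n))⁆ = 0 ∧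
    ⁅(opD : Module.End ℂ (PolyAlg n)), (opL p : Module.End ℂ (PolyAlg n))⁆ = 0 ∧
    ⁅(opE : Module.End ℂ (PolyAlg n)), (opG p : Module.End ℂ (PolyAlg n))⁆ = (opG p : Module.End ℂ (PolyAlg n)) ∧
    ⁅(opE : Module.End ℂ (PolyAlg n)), (opD : Module.End ℂ (PolyAlg n))⁆ = -(opD : Module.End ℂ (PolyAlg n)) ∧
    ⁅(opE : Module.End ℂ (PolyAlg n)), (opL p : Module.End ℂ (PolyAlg n))⁆ = 0 ∧
    ⁅(opR p : Module.End ℂ (PolyAlg n)), (opG p : Module.End ℂ (PolyAlg n))⁆ = 0 ∧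
    ⁅(opR p : Module.End ℂ (PolyAlg n)), (opD : Module.End ℂ (PolyAlg n))⁆ = (-(2 • opG p) : Module.End ℂ (PolyAlg n)) ∧
    ⁅(opR p : Module.End ℂ (PolyAlg n)), (opL p : Module.End ℂ (PolyAlg n))⁆ = 0 ∧
    ⁅(opT p : Module.End ℂ (PolyAlg n)), (opG p : Module.End ℂ (PolyAlg n))⁆ = 2 • (opD : Module.End ℂ (PolyAlg n)) ∧
    ⁅(opT p : Module.End ℂ (PolyAlg n)), (opD : Module.End ℂ (PolyAlg n))⁆ = 0 ∧
    ⁅(opT p : Module.End ℂ (PolyAlg n)), (opL p : Module.End ℂ (PolyAlg n))⁆ = 0 :=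
  ⟨relER p, relET p, relTR p, relDG p, relGL p, relDL p, relEG p, relED, relEL p,
   relRG p, relRD p, relRL p, relTG p, relTD p, relTL p⟩
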